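/- arXiv:0905.4048 — 2 statements merged into one kernel-verified Lean document; each statement's English description precedes it below -/
import Mathlib

section
/- Let I be a proper ideal of R (I ≠ R). Then card(R/I) = 2 if and only if for all integers i and j one has both ζ^i − ζ^j ∈ I and ζ^i + ζ^j ∈ I (i.e., all the roots of unity ±ζ^i carry the same colour in the colouring induced by I). -/
open Complex

/-- The primitive `n`-th root of unity `ζ = exp(2πi/n)`. -/
noncomputable def zeta (n : ℕ) : ℂ := Complex.exp (2 * Real.pi * Complex.I / n)

/-- The ring of cyclotomic integers `M_n = ℤ[ζ_n]`, as a subring of `ℂ`. -/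
noncomputable def Rn (n : ℕ) : Subring ℂ := Subring.closure {zeta n}

/-- `ζ_n` as an element of `M_n`. -/
noncomputable def zetaR (n : ℕ) : ↥(Rn n) := ⟨zeta n, Subring.subset_closure rfl⟩

/-- `z ∈ ℂ` lies in the ideal `I` of `Rn n` (viewed inside `ℂ`). -/
def InIdeal (n : ℕ) (I : Ideal ↥(Rn n)) (z : ℂ) : Prop :=
  ∃ w : ↥(Rn n), w ∈ I ∧ (w : ℂ) = z

/-- An isometry of the complex plane: `z ↦ a z + b` or `z ↦ a conj z + b` with `|a| = 1`. -/
def IsIsometry (g : ℂ → ℂ) : Prop :=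
  ∃ a b : ℂ, ‖a‖ = 1 ∧
    ((∀ z, g z = a * z + b) ∨ (∀ z, g z = a * (starRingEnd ℂ) z + b))

/-- An orientation-preserving isometry of the complex plane: `z ↦ a z + b` with `|a| = 1`. -/
def IsOPIsometry (g : ℂ → ℂ) : Prop :=
  ∃ a b : ℂ, ‖a‖ = 1 ∧ ∀ z, g z = a * z + b

/-- `g` is a colour symmetry of the colouring of `Rn n` induced by the ideal `I`. -/
def IsColourSym (n : ℕ) (I : Ideal ↥(Rn n)) (g : ℂ → ℂ) : Prop :=
  ∀ x y : ℂ, x ∈ Rn n → y ∈ Rn n → (InIdeal n I (x - y) ↔ InIdeal n I (g x - g y))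

/-- The colouring induced by `I` is perfect. -/
def IsPerfectColouring (n : ℕ) (I : Ideal ↥(Rn n)) : Prop :=
  ∀ g : ℂ → ℂ, IsIsometry g → g '' (Rn n : Set ℂ) = (Rn n : Set ℂ) → IsColourSym n I g

/-- The colouring induced by `I` is chirally perfect. -/
def IsChirallyPerfectColouring (n : ℕ) (I : Ideal ↥(Rn n)) : Prop :=
  ∀ g : ℂ → ℂ, IsOPIsometry g → g '' (Rn n : Set ℂ) = (Rn n : Set ℂ) → IsColourSym n I g

/-!
A ring with exactly two elements is `𝔽₂`: there `2 = 0`, and the unit `ζ` must be `1`.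
Conversely, if `ζ ≡ 1` and `2 ≡ 0` modulo `I`, then every element of `ℤ[ζ]` is congruent to an
integer, hence to `0` or `1`. The conditions on `± ζ^i` amount exactly to `ζ ≡ 1` and `2 ≡ 0`
(take `(i, j) = (1, 0)` and `(0, 0)`).
-/

theorem RingHom.apply_mem_bot_of_eq_one_on_generators {A S : Type*} [Ring A] [Ring S] {s : Set A}
    (f : Subring.closure s →+* S) (hf : ∀ x : Subring.closure s, (x : A) ∈ s → f x = 1)
    (x : Subring.closure s) : f x ∈ (⊥ : Subring S) := by
  obtain ⟨x, hx⟩ := x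
  induction hx using Subring.closure_induction with
  | mem x hx => rw [hf ⟨x, _⟩ hx]; exact one_mem _
  | zero => exact map_zero f ▸ zero_mem _
  | one => exact map_one f ▸ one_mem _
  | add x y _ _ hx hy => exact (map_add f ⟨x, _⟩ ⟨y, _⟩).symm ▸ add_mem hx hy
  | neg x _ hx => exact (map_neg f ⟨x, _⟩).symm ▸ neg_mem hx
  | mul x y _ _ hx hy => exact (map_mul f ⟨x, _⟩ ⟨y, _⟩).symm ▸ mul_mem hx hy

theorem Nat.card_eq_two_iff_forall_eq_zero_or_eq_one {S : Type*} [MulZeroOneClass S]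
    [Nontrivial S] :
    Nat.card S = 2 ↔ ∀ x : S, x = 0 ∨ x = 1 := by
  rw [Nat.card_eq_two_iff' 0]
  constructor
  · rintro ⟨y, -, hy⟩ x
    exact or_iff_not_imp_left.2 fun hx => (hy x hx).trans (hy 1 one_ne_zero).symm
  · intro h
    exact ⟨1, one_ne_zero, fun y hy => (h y).resolve_left hy⟩

theorem two_eq_zero_of_forall_eq_zero_or_eq_one {S : Type*} [Ring S] [Nontrivial S]
    (h : ∀ x : S, x = 0 ∨ x = 1) : (2 : S) = 0 :=
  (h 2).resolve_right fun h2 => by simp [← one_add_one_eq_two] at h2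

theorem IsUnit.eq_one_of_forall_eq_zero_or_eq_one {S : Type*} [MonoidWithZero S] [Nontrivial S]
    (h : ∀ x : S, x = 0 ∨ x = 1) {u : S} (hu : IsUnit u) : u = 1 :=
  (h u).resolve_left hu.ne_zero

theorem intCast_eq_zero_or_eq_one_of_two_eq_zero {S : Type*} [Ring S] (h2 : (2 : S) = 0) (k : ℤ) :
    (k : S) = 0 ∨ (k : S) = 1 := by
  rw [← Int.mul_ediv_add_emod k 2]
  push_cast
  rw [h2, zero_mul, zero_add]
  rcases Int.emod_two_eq_zero_or_one k with hk | hk <;> simp [hk]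

theorem Ideal.forall_zpow_sub_mem_and_add_mem_iff {R : Type*} [CommRing R] (I : Ideal R) (u : Rˣ) :
    (∀ i j : ℤ, ((u ^ i : Rˣ) : R) - (u ^ j : Rˣ) ∈ I ∧ ((u ^ i : Rˣ) : R) + (u ^ j : Rˣ) ∈ I) ↔
      Ideal.Quotient.mk I u = 1 ∧ (2 : R ⧸ I) = 0 := by
  simp only [← Ideal.Quotient.eq_zero_iff_mem, map_sub, map_add]
  constructor
  · intro h
    refine ⟨sub_eq_zero.1 (by simpa using (h 1 0).1), ?_⟩
    simpa [one_add_one_eq_two] using (h 0 0).2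
  · rintro ⟨hu, h2⟩ i j
    have hpow : ∀ k : ℤ, Ideal.Quotient.mk I ((u ^ k : Rˣ) : R) = 1 := fun k => by
      have : Units.map (Ideal.Quotient.mk I : R →* R ⧸ I) u = 1 := Units.ext hu
      calc Ideal.Quotient.mk I ((u ^ k : Rˣ) : R)
          = ((Units.map (Ideal.Quotient.mk I : R →* R ⧸ I) u ^ k : (R ⧸ I)ˣ) : R ⧸ I) := by
            rw [← map_zpow]; rfl
        _ = 1 := by rw [this, one_zpow, Units.val_one]
    simp [hpow, one_add_one_eq_two, h2]

theorem zetaR_pow_self {n : ℕ} (hn : n ≠ 0) : zetaR n ^ n = 1 :=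
  Subtype.ext ((Complex.isPrimitiveRoot_exp n hn).pow_eq_one)

noncomputable def zetaUnit {n : ℕ} (hn : n ≠ 0) : (Rn n)ˣ :=
  Units.ofPowEqOne _ n (zetaR_pow_self hn) hn

theorem coe_zetaUnit_zpow {n : ℕ} (hn : n ≠ 0) (i : ℤ) :
    (((zetaUnit hn ^ i : (Rn n)ˣ) : Rn n) : ℂ) = zeta n ^ i := by
  calc (((zetaUnit hn ^ i : (Rn n)ˣ) : Rn n) : ℂ)
      = ((Units.map (Rn n).subtype.toMonoidHom (zetaUnit hn ^ i) : ℂˣ) : ℂ) := rfl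
    _ = zeta n ^ i := by rw [map_zpow, Units.val_zpow_eq_zpow_val]; rfl

theorem inIdeal_coe_iff {n : ℕ} (I : Ideal (Rn n)) (x : Rn n) : InIdeal n I x ↔ x ∈ I :=
  ⟨fun ⟨_, hw, h⟩ => Subtype.ext h ▸ hw, fun hx => ⟨x, hx, rfl⟩⟩

theorem Rn.quotientMk_mem_bot {n : ℕ} (I : Ideal (Rn n)) (hζ : Ideal.Quotient.mk I (zetaR n) = 1)
    (x : Rn n) :
    Ideal.Quotient.mk I x ∈ (⊥ : Subring (Rn n ⧸ I)) :=
  RingHom.apply_mem_bot_of_eq_one_on_generators (s := {zeta n}) (Ideal.Quotient.mk I)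
    (fun y hy => by rwa [show y = zetaR n from Subtype.ext hy]) x

theorem stmt10_general (n : ℕ) (hn : 3 ≤ n) (I : Ideal ↥(Rn n)) (hI : I ≠ ⊤) :
    Nat.card (↥(Rn n) ⧸ I) = 2 ↔
      ∀ i j : ℤ, InIdeal n I ((zeta n) ^ i - (zeta n) ^ j) ∧
        InIdeal n I ((zeta n) ^ i + (zeta n) ^ j) := by
  have hn0 : n ≠ 0 := by omega
  have : Nontrivial (Rn n ⧸ I) := Ideal.Quotient.nontrivial_iff.mpr hI
  simp only [← coe_zetaUnit_zpow hn0, ← AddSubgroupClass.coe_sub, ← AddMemClass.coe_add,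
    inIdeal_coe_iff, Ideal.forall_zpow_sub_mem_and_add_mem_iff,
    Nat.card_eq_two_iff_forall_eq_zero_or_eq_one]
  constructor
  · intro h
    exact ⟨((zetaUnit hn0).isUnit.map _).eq_one_of_forall_eq_zero_or_eq_one h,
      two_eq_zero_of_forall_eq_zero_or_eq_one h⟩
  · rintro ⟨hζ, h2⟩ x
    obtain ⟨r, rfl⟩ := Ideal.Quotient.mk_surjective x
    obtain ⟨k, hk⟩ := Subring.mem_bot.1 (Rn.quotientMk_mem_bot I hζ r)
    exact hk ▸ intCast_eq_zero_or_eq_one_of_two_eq_zero h2 k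

/-- for a proper ideal `I`, `card(R/I) = 2` iff all roots of unity
`± ζ^i` carry the same colour, i.e. `ζ^i - ζ^j ∈ I` and `ζ^i + ζ^j ∈ I` for all
integers `i, j`. -/
theorem stmt10 (n : ℕ) (hn : 3 ≤ n) (hn2 : n % 4 ≠ 2) (I : Ideal ↥(Rn n)) (hI : I ≠ ⊤) :
    Nat.card (↥(Rn n) ⧸ I) = 2 ↔
      ∀ i j : ℤ, InIdeal n I ((zeta n) ^ i - (zeta n) ^ j) ∧
        InIdeal n I ((zeta n) ^ i + (zeta n) ^ j) :=
  stmt10_general n hn I hI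
end

section
/- Suppose n ∈ {3,5,7,8,9,11,12,13,15,16,17,19,20,21,24,25,27,28,32,33,35,36,40,44,45,48,60,84} (the class number one values with n ≠ 4), and let I = 2R. Then the colouring induced by I is perfect, and an isometry g of the complex plane with g(R) = R satisfies g(x) − x ∈ I for all x ∈ R if and only if there exists t ∈ I such that either g(z) = z + t for all z, or g(z) = −z + t for all z. That is, H = G and the colour preserving group K equals T_{(2)} ⋊ C₂. -/
open Complex

/-!
An isometry `g` with `g R = R` is `z ↦ a z + b` or `z ↦ a z̄ + b` with `a, b ∈ R` and `|a| = 1`,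
so `a⁻¹ = ā ∈ R` is a unit; as `R` and `2R` are stable under complex conjugation, `g` permutes the
cosets of `2R`, i.e. the colouring is perfect.

If moreover `g x ≡ x (mod 2)` for all `x`, then `b ≡ 0` and `a ≡ 1`. Since `ℚ(ζ)` is a CM field,
every conjugate of `a` has modulus one, so every conjugate of `r = (a - 1) / 2` has modulus at most
one. If `r ≠ 0`, its norm is a nonzero integer, which forces every conjugate of `r` to have modulus
exactly one; hence `|a - 1| = 2` and `a = -1`. For a reflection one gets in the same way
`ζ² ≡ 1 (mod 2)`, so `ζ² = ±1`, which is impossible unless `n ∣ 4`.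
-/

theorem Complex.eq_neg_one_of_norm_eq_one_of_two_le_norm_sub_one {z : ℂ} (hz : ‖z‖ = 1)
    (h : 2 ≤ ‖z - 1‖) : z = -1 := by
  have hz' : z.re * z.re + z.im * z.im = 1 := by
    simpa [Complex.normSq_apply, hz] using (Complex.sq_norm z).symm
  have h' : 4 ≤ (z.re - 1) * (z.re - 1) + z.im * z.im := by
    have := pow_le_pow_left₀ zero_le_two h 2
    rwa [Complex.sq_norm, Complex.normSq_apply, Complex.sub_re, Complex.sub_im, Complex.one_re,
      Complex.one_im, sub_zero, show (2 : ℝ) ^ 2 = 4 by norm_num] at this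
  have hre : z.re = -1 := by nlinarith
  have him : z.im = 0 := by nlinarith
  exact Complex.ext (by simp [hre]) (by simp [him])

namespace NumberField

variable {K : Type*} [Field K] [NumberField K]

theorem one_le_norm_embedding_of_house_le_one {α : 𝓞 K} (hα : α ≠ 0) (h : house (α : K) ≤ 1)
    (σ : K →+* ℂ) : 1 ≤ ‖σ α‖ := by
  have hnorm : 1 ≤ ‖Algebra.norm ℚ (α : K)‖ := by
    rw [← Algebra.coe_norm_int, ← Rat.norm_cast_real, Rat.cast_intCast, Int.norm_cast_real,
      Int.norm_eq_abs]
    exact_mod_cast Int.one_le_abs (Algebra.norm_ne_zero_iff.mpr hα)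
  calc 1 ≤ ‖Algebra.norm ℚ (α : K)‖ := hnorm
    _ ≤ ‖σ α‖ * house (α : K) ^ (Module.finrank ℚ K - 1) := norm_norm_le_norm_mul_house_pow _ σ
    _ ≤ ‖σ α‖ * 1 := by gcongr; exact pow_le_one₀ (house_nonneg _) h
    _ = ‖σ α‖ := mul_one _

theorem house_le_of_forall_norm_embedding_le {α : K} {c : ℝ} (h : ∀ σ : K →+* ℂ, ‖σ α‖ ≤ c) :
    house α ≤ c := by
  obtain ⟨σ, -, hσ⟩ := Finset.exists_mem_eq_sup' Finset.univ_nonempty (fun φ : K →+* ℂ ↦ ‖φ α‖₊)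
  rw [house_eq_sup', hσ, coe_nnnorm]
  exact h σ

namespace IsCMField

open ComplexConjugate

variable [IsCMField K]

theorem norm_embedding_eq_one {x : K} {ψ : K →+* ℂ} (hψ : ‖ψ x‖ = 1) (φ : K →+* ℂ) :
    ‖φ x‖ = 1 := by
  have hx : x * complexConj K x = 1 := by
    apply ψ.injective
    rw [map_mul, complexEmbedding_complexConj, Complex.mul_conj', hψ, map_one]
    norm_num
  have : (‖φ x‖ : ℂ) ^ 2 = 1 := by
    rw [← Complex.mul_conj', ← complexEmbedding_complexConj, ← map_mul, hx, map_one]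
  exact (pow_eq_one_iff_of_nonneg (norm_nonneg _) two_ne_zero).mp (by exact_mod_cast this)

theorem eq_one_or_eq_neg_one_of_sub_one_eq_two_mul {x : K} {r : 𝓞 K} (hx : x - 1 = 2 * r)
    {ψ : K →+* ℂ} (hψ : ‖ψ x‖ = 1) : x = 1 ∨ x = -1 := by
  rcases eq_or_ne r 0 with rfl | hr
  · left
    simpa [sub_eq_zero] using hx
  right
  have hdist : ∀ φ : K →+* ℂ, 2 * ‖φ r‖ = ‖φ x - 1‖ := fun φ ↦ by
    rw [← map_one φ, ← map_sub, hx, map_mul, map_ofNat, norm_mul, Complex.norm_two]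
  have hhouse : house (r : K) ≤ 1 := house_le_of_forall_norm_embedding_le fun φ ↦ by
    have := norm_sub_le (φ x) 1
    rw [norm_embedding_eq_one hψ φ, norm_one] at this
    linarith [hdist φ]
  have h2 : 2 ≤ ‖ψ x - 1‖ := by
    rw [← hdist]
    linarith [one_le_norm_embedding_of_house_le_one hr hhouse ψ]
  apply ψ.injective
  rw [map_neg, map_one]
  exact Complex.eq_neg_one_of_norm_eq_one_of_two_le_norm_sub_one hψ h2

end IsCMField

end NumberField

open ComplexConjugate IntermediateField NumberField

theorem isPrimitiveRoot_zeta {n : ℕ} (hn : n ≠ 0) : IsPrimitiveRoot (zeta n) n :=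
  Complex.isPrimitiveRoot_exp n hn

theorem zeta_mem_Rn (n : ℕ) : zeta n ∈ Rn n :=
  Subring.subset_closure rfl

theorem isIntegral_zeta (n : ℕ) : IsIntegral ℤ (zeta n) := by
  rcases eq_or_ne n 0 with rfl | hn
  · simpa [zeta] using isIntegral_one
  exact (isPrimitiveRoot_zeta hn).isIntegral (Nat.pos_of_ne_zero hn)

theorem isIntegral_of_mem_Rn {n : ℕ} {z : ℂ} (hz : z ∈ Rn n) : IsIntegral ℤ z := by
  have : Rn n ≤ (integralClosure ℤ ℂ).toSubring :=
    Subring.closure_le.mpr (Set.singleton_subset_iff.mpr (isIntegral_zeta n))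
  exact this hz

theorem conj_zeta (n : ℕ) : conj (zeta n) = zeta n ^ (n - 1) := by
  rcases eq_or_ne n 0 with rfl | hn
  · simp [zeta]
  have hζ := isPrimitiveRoot_zeta hn
  rw [← Complex.inv_eq_conj (hζ.norm'_eq_one hn), pow_sub₀ _ (hζ.ne_zero hn) (by omega),
    hζ.pow_eq_one, pow_one, one_mul]

theorem conj_mem_Rn (n : ℕ) {z : ℂ} (hz : z ∈ Rn n) : conj z ∈ Rn n := by
  have : Rn n ≤ (Rn n).comap (starRingEnd ℂ) :=
    Subring.closure_le.mpr (Set.singleton_subset_iff.mpr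
      (by simpa [conj_zeta] using pow_mem (zeta_mem_Rn n) (n - 1)))
  exact this hz

theorem isCyclotomicExtension_adjoin_zeta (n : ℕ) [NeZero n] :
    IsCyclotomicExtension {n} ℚ ℚ⟮zeta n⟯ := by
  change IsCyclotomicExtension {n} ℚ ℚ⟮zeta n⟯.toSubalgebra
  rw [IntermediateField.adjoin_simple_toSubalgebra_of_isAlgebraic
    ((isIntegral_zeta n).tower_top.isAlgebraic)]
  exact (isPrimitiveRoot_zeta (NeZero.ne n)).adjoin_isCyclotomicExtension ℚ

theorem Rn_le_adjoin_zeta (n : ℕ) : Rn n ≤ ℚ⟮zeta n⟯.toSubfield.toSubring :=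
  Subring.closure_le.mpr (Set.singleton_subset_iff.mpr (mem_adjoin_simple_self ℚ _))

section InIdeal

variable {n : ℕ} {I : Ideal ↥(Rn n)} {z w : ℂ}

theorem InIdeal.sub (hz : InIdeal n I z) (hw : InIdeal n I w) : InIdeal n I (z - w) := by
  obtain ⟨z, hz, rfl⟩ := hz
  obtain ⟨w, hw, rfl⟩ := hw
  exact ⟨z - w, I.sub_mem hz hw, rfl⟩

theorem InIdeal.mul_left {a : ℂ} (ha : a ∈ Rn n) (hz : InIdeal n I z) : InIdeal n I (a * z) := by
  obtain ⟨z, hz, rfl⟩ := hz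
  exact ⟨⟨a, ha⟩ * z, I.mul_mem_left _ hz, rfl⟩

theorem inIdeal_mul_iff_of_norm_eq_one {a : ℂ} (ha : a ∈ Rn n) (ha1 : ‖a‖ = 1) :
    InIdeal n I (a * z) ↔ InIdeal n I z := by
  refine ⟨fun h ↦ ?_, InIdeal.mul_left ha⟩
  have ha0 : a ≠ 0 := by
    rintro rfl
    simp at ha1
  have hz : z = conj a * (a * z) := by
    rw [← mul_assoc, ← Complex.inv_eq_conj ha1, inv_mul_cancel₀ ha0, one_mul]
  rw [hz]
  exact h.mul_left (conj_mem_Rn n ha)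

theorem inIdeal_span_singleton_iff {a : ↥(Rn n)} :
    InIdeal n (Ideal.span {a}) z ↔ ∃ r ∈ Rn n, z = a * r := by
  constructor
  · rintro ⟨w, hw, rfl⟩
    obtain ⟨r, rfl⟩ := Ideal.mem_span_singleton'.mp hw
    exact ⟨r, r.2, by rw [mul_comm]; rfl⟩
  · rintro ⟨r, hr, rfl⟩
    exact ⟨a * ⟨r, hr⟩, Ideal.mul_mem_right _ _ (Ideal.mem_span_singleton_self a), rfl⟩

theorem inIdeal_span_singleton_conj_iff {a : ↥(Rn n)} (ha : conj (a : ℂ) = a) :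
    InIdeal n (Ideal.span {a}) (conj z) ↔ InIdeal n (Ideal.span {a}) z := by
  suffices ∀ z, InIdeal n (Ideal.span {a}) z → InIdeal n (Ideal.span {a}) (conj z) from
    ⟨fun h ↦ by simpa using this _ h, this z⟩
  intro z h
  obtain ⟨r, hr, rfl⟩ := inIdeal_span_singleton_iff.mp h
  exact inIdeal_span_singleton_iff.mpr ⟨conj r, conj_mem_Rn n hr, by rw [map_mul, ha]⟩

end InIdeal

theorem eq_one_or_eq_neg_one_of_inIdeal_sub_one {n : ℕ} (hn : 2 < n) {u : ℂ} (hu : ‖u‖ = 1)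
    (h : InIdeal n (Ideal.span {2}) (u - 1)) : u = 1 ∨ u = -1 := by
  obtain ⟨r, hr, hur⟩ := inIdeal_span_singleton_iff.mp h
  have : NeZero n := ⟨by omega⟩
  have := isCyclotomicExtension_adjoin_zeta n
  have := IsCyclotomicExtension.numberField ({n} : Set ℕ) ℚ ℚ⟮zeta n⟯
  have := IsCyclotomicExtension.Rat.isCMField ℚ⟮zeta n⟯ ⟨n, Set.mem_singleton n, hn⟩
  let ψ : ℚ⟮zeta n⟯ →+* ℂ := ℚ⟮zeta n⟯.val
  let rK : 𝓞 ℚ⟮zeta n⟯ := ⟨⟨r, Rn_le_adjoin_zeta n hr⟩,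
    (isIntegral_algHom_iff ψ.toIntAlgHom Subtype.val_injective).mp (isIntegral_of_mem_Rn hr)⟩
  have hψ : ψ (1 + 2 * rK) = u := by
    rw [map_add, map_one, map_mul, map_ofNat]
    exact (sub_eq_iff_eq_add'.mp hur).symm
  rcases IsCMField.eq_one_or_eq_neg_one_of_sub_one_eq_two_mul (x := 1 + 2 * (rK : ℚ⟮zeta n⟯))
    (by ring) (hψ ▸ hu) with h | h
  · exact .inl (by rw [← hψ, h, map_one])
  · exact .inr (by rw [← hψ, h, map_neg, map_one])

theorem IsIsometry.exists_of_mapsTo {n : ℕ} {g : ℂ → ℂ} (hg : IsIsometry g)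
    (hR : Set.MapsTo g (Rn n) (Rn n)) :
    ∃ a ∈ Rn n, ∃ b ∈ Rn n, ‖a‖ = 1 ∧ ((∀ z, g z = a * z + b) ∨ ∀ z, g z = a * conj z + b) := by
  obtain ⟨a, b, ha1, hform⟩ := hg
  have hb : b = g 0 := by rcases hform with h | h <;> simp [h]
  have ha : a = g 1 - g 0 := by rcases hform with h | h <;> simp [h]
  exact ⟨a, ha ▸ sub_mem (hR (one_mem _)) (hR (zero_mem _)), b, hb ▸ hR (zero_mem _), ha1, hform⟩

theorem isPerfectColouring_span_two (n : ℕ) : IsPerfectColouring n (Ideal.span {2}) := by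
  intro g hg hR x y _ _
  obtain ⟨a, ha, b, -, ha1, hg | hg⟩ :=
    hg.exists_of_mapsTo (Set.mapsTo_iff_image_subset.mpr hR.subset)
  · rw [hg, hg, show a * x + b - (a * y + b) = a * (x - y) by ring,
      inIdeal_mul_iff_of_norm_eq_one ha ha1]
  · rw [hg, hg, show a * conj x + b - (a * conj y + b) = a * conj (x - y) by rw [map_sub]; ring,
      inIdeal_mul_iff_of_norm_eq_one ha ha1, inIdeal_span_singleton_conj_iff (map_ofNat _ 2)]

theorem zeta_pow_four_eq_one_of_inIdeal_reflection {n : ℕ} (hn : 2 < n) {a b : ℂ}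
    (h : ∀ x ∈ Rn n, InIdeal n (Ideal.span {2}) (a * conj x + b - x)) : zeta n ^ 4 = 1 := by
  have hζ := isPrimitiveRoot_zeta (n := n) (by omega)
  have hζ1 : ‖zeta n‖ = 1 := hζ.norm'_eq_one (by omega)
  have hζconj : zeta n * conj (zeta n) = 1 := by
    rw [← Complex.inv_eq_conj hζ1, mul_inv_cancel₀ (hζ.ne_zero (by omega))]
  have hsq : InIdeal n (Ideal.span {2}) (zeta n ^ 2 - 1) := by
    have h1 := (h 1 (one_mem _)).sub (h 0 (zero_mem _))
    have hz := ((h _ (zeta_mem_Rn n)).sub (h 0 (zero_mem _))).mul_left (zeta_mem_Rn n)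
    -- `ζ (a ζ̄ - ζ) = a - ζ²`, and `a ≡ 1`
    convert h1.sub hz using 1
    simp only [map_one, map_zero]
    linear_combination a * hζconj
  have hsq1 : ‖zeta n ^ 2‖ = 1 := by rw [norm_pow, hζ1, one_pow]
  rcases eq_one_or_eq_neg_one_of_inIdeal_sub_one hn hsq1 hsq with h2 | h2
  · rw [show 4 = 2 * 2 from rfl, pow_mul, h2, one_pow]
  · rw [show 4 = 2 * 2 from rfl, pow_mul, h2]; norm_num

theorem IsIsometry.forall_inIdeal_span_two_sub_self_iff {n : ℕ} (hn : 2 < n) (hn4 : n ≠ 4)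
    {g : ℂ → ℂ} (hg : IsIsometry g) (hR : Set.MapsTo g (Rn n) (Rn n)) :
    (∀ x ∈ Rn n, InIdeal n (Ideal.span {2}) (g x - x)) ↔
      ∃ t, InIdeal n (Ideal.span {2}) t ∧ ((∀ z, g z = z + t) ∨ ∀ z, g z = -z + t) := by
  constructor
  · intro h
    obtain ⟨a, -, b, -, ha1, hg | hg⟩ := hg.exists_of_mapsTo hR
    · have hb : InIdeal n (Ideal.span {2}) b := by simpa [hg] using h 0 (zero_mem _)
      have ha : InIdeal n (Ideal.span {2}) (a - 1) := by
        convert (h 1 (one_mem _)).sub hb using 1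
        rw [hg]
        ring
      refine ⟨b, hb, ?_⟩
      rcases eq_one_or_eq_neg_one_of_inIdeal_sub_one hn ha1 ha with rfl | rfl
      · exact .inl fun z ↦ by rw [hg, one_mul]
      · exact .inr fun z ↦ by rw [hg, neg_one_mul]
    · have hdvd := (isPrimitiveRoot_zeta (by omega)).dvd_of_pow_eq_one 4
        (zeta_pow_four_eq_one_of_inIdeal_reflection hn fun x hx ↦ hg x ▸ h x hx)
      have := Nat.le_of_dvd four_pos hdvd
      interval_cases n <;> simp_all
  · rintro ⟨t, ht, hg | hg⟩ x hx
    · rwa [hg, add_sub_cancel_left]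
    · have h2x : InIdeal n (Ideal.span {2}) (2 * x) := inIdeal_span_singleton_iff.mpr ⟨x, hx, rfl⟩
      convert ht.sub h2x using 1
      rw [hg]
      ring

/-- for the class number one values of `n` with `n ≠ 4`, the colouring
induced by `(2)` is perfect (`H = G`), and the colour preserving isometries are exactly
`z ↦ z + t` and `z ↦ -z + t` with `t ∈ (2)`, i.e. `K = T_{(2)} ⋊ C₂`. -/
theorem stmt12 (n : ℕ)
    (hn : n ∈ ({3, 5, 7, 8, 9, 11, 12, 13, 15, 16, 17, 19, 20, 21, 24, 25, 27, 28, 32,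
      33, 35, 36, 40, 44, 45, 48, 60, 84} : Set ℕ)) :
    IsPerfectColouring n (Ideal.span {(2 : ↥(Rn n))}) ∧
    ∀ g : ℂ → ℂ, IsIsometry g → g '' (Rn n : Set ℂ) = (Rn n : Set ℂ) →
      ((∀ x ∈ (Rn n : Set ℂ), InIdeal n (Ideal.span {(2 : ↥(Rn n))}) (g x - x)) ↔
        ∃ t : ℂ, InIdeal n (Ideal.span {(2 : ↥(Rn n))}) t ∧
          ((∀ z : ℂ, g z = z + t) ∨ (∀ z : ℂ, g z = -z + t))) := by
  have hn' : 2 < n ∧ n ≠ 4 := by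
    simp only [Set.mem_insert_iff, Set.mem_singleton_iff] at hn
    omega
  exact ⟨isPerfectColouring_span_two n, fun g hg hR ↦
    hg.forall_inIdeal_span_two_sub_self_iff hn'.1 hn'.2 (Set.mapsTo_iff_image_subset.mpr hR.subset)⟩
end
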